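/- With the Moyal star product u ⋆ v = Σ_{r≥0} (1/r!)(1/2i)^r P^r(u,v) on functions on ℝ², the functions Z̃ = α₁p + β₁e^q and T̃ = α₂p + β₂e^q satisfy iZ̃ ⋆ iT̃ - iT̃ ⋆ iZ̃ = i(α₁β₂ - α₂β₁)e^q; that is, the star-commutator of iZ̃ and iT̃ equals i·(the Hamiltonian function of [Z,T]), where Z = α₁X + β₁Y, T = α₂X + β₂Y and [X,Y] = Y. -/

import Mathlib

open Real Complex Finset

/-- Partial derivative in the first variable `p`. -/
noncomputable def pdp (f : ℝ × ℝ → ℂ) : ℝ × ℝ → ℂ :=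
  fun x => deriv (fun p => f (p, x.2)) x.1

/-- Partial derivative in the second variable `q`. -/
noncomputable def pdq (f : ℝ × ℝ → ℂ) : ℝ × ℝ → ℂ :=
  fun x => deriv (fun q => f (x.1, q)) x.2

/-- The `r`-th Moyal bidifferential operator for the Poisson tensor of `dp∧dq`:
`P^r(u,v) = Σ_{j=0}^r C(r,j)(-1)^{r-j} (∂_p^j ∂_q^{r-j} u)(∂_q^j ∂_p^{r-j} v)`. -/
noncomputable def moyalP (r : ℕ) (u v : ℝ × ℝ → ℂ) : ℝ × ℝ → ℂ :=
  fun x => ∑ j ∈ Finset.range (r + 1),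
    (r.choose j : ℂ) * (-1) ^ (r - j) *
      (pdp^[j] (pdq^[r - j] u)) x * (pdq^[j] (pdp^[r - j] v)) x

/-- The Moyal star product `u ⋆ v = Σ_{r≥0} (1/r!)(1/2i)^r P^r(u,v)`. -/
noncomputable def moyalStar (u v : ℝ × ℝ → ℂ) : ℝ × ℝ → ℂ :=
  fun x => ∑' r : ℕ, (1 / (r.factorial : ℂ)) * (1 / (2 * Complex.I)) ^ r * moyalP r u v x

lemma pdp_const0 : pdp (fun _ => (0:ℂ)) = fun _ => 0 := by
  funext x; simp [pdp]

lemma pdq_const0 : pdq (fun _ => (0:ℂ)) = fun _ => 0 := by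
  funext x; simp [pdq]

/-- The function `iβe^q`. -/
noncomputable def expq (β : ℝ) : ℝ × ℝ → ℂ := fun x => Complex.I * β * Real.exp x.2

lemma pdp_const (c : ℂ) : pdp (fun _ => c) = fun _ => 0 := by
  funext x; simp [pdp]

lemma pdq_const (c : ℂ) : pdq (fun _ => c) = fun _ => 0 := by
  funext x; simp [pdq]

lemma pdp_iter_zero (j : ℕ) : pdp^[j] (fun _ => (0:ℂ)) = fun _ => 0 := by
  induction j with
  | zero => simp
  | succ k ih => rw [Function.iterate_succ_apply, pdp_const0, ih]

lemma pdq_iter_zero (j : ℕ) : pdq^[j] (fun _ => (0:ℂ)) = fun _ => 0 := by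
  induction j with
  | zero => simp
  | succ k ih => rw [Function.iterate_succ_apply, pdq_const0, ih]

lemma pdp_lin (α β : ℝ) :
    pdp (fun x : ℝ × ℝ => Complex.I * (α * x.1 + β * Real.exp x.2)) =
      fun _ => Complex.I * α := by
  funext x
  have h : HasDerivAt (fun p : ℝ => Complex.I * (α * p + β * Real.exp x.2))
      (Complex.I * α) x.1 := by
    have h1 : HasDerivAt (fun p : ℝ => (α * p + β * Real.exp x.2 : ℝ))
        α x.1 := by
      simpa using ((hasDerivAt_id x.1).const_mul α).add_const (β * Real.exp x.2)
    have h2 := h1.ofReal_comp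
    have h3 := h2.const_mul Complex.I
    simpa using h3
  simpa [pdp] using h.deriv

lemma pdq_lin (α β : ℝ) :
    pdq (fun x : ℝ × ℝ => Complex.I * (α * x.1 + β * Real.exp x.2)) = expq β := by
  funext x
  have h : HasDerivAt (fun q : ℝ => Complex.I * (α * x.1 + β * Real.exp q))
      (Complex.I * β * Real.exp x.2) x.2 := by
    have h1 : HasDerivAt (fun q : ℝ => (α * x.1 + β * Real.exp q : ℝ))
        (β * Real.exp x.2) x.2 := by
      simpa using ((Real.hasDerivAt_exp x.2).const_mul β).const_add (α * x.1)
    have h3 := h1.ofReal_comp.const_mul Complex.I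
    simpa [mul_assoc] using h3
  simpa [pdq, expq, mul_assoc] using h.deriv

lemma pdp_expq (β : ℝ) : pdp (expq β) = fun _ => 0 := by
  funext x; simp [pdp, expq]

lemma pdq_expq (β : ℝ) : pdq (expq β) = expq β := by
  funext x
  have h : HasDerivAt (fun q : ℝ => Complex.I * β * Real.exp q)
      (Complex.I * β * Real.exp x.2) x.2 := by
    simpa [mul_assoc] using ((Real.hasDerivAt_exp x.2).ofReal_comp).const_mul
      (Complex.I * β)
  simpa [pdq, expq] using h.deriv

lemma pdp_iter_const (c : ℂ) (j : ℕ) (hj : 1 ≤ j) :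
    pdp^[j] (fun _ => c) = fun _ => 0 := by
  induction j with
  | zero => omega
  | succ k ih =>
    rw [Function.iterate_succ_apply, pdp_const, pdp_iter_zero]

lemma pdq_iter_const (c : ℂ) (j : ℕ) (hj : 1 ≤ j) :
    pdq^[j] (fun _ => c) = fun _ => 0 := by
  induction j with
  | zero => omega
  | succ k ih =>
    rw [Function.iterate_succ_apply, pdq_const, pdq_iter_zero]

lemma pdq_iter_expq (β : ℝ) (j : ℕ) : pdq^[j] (expq β) = expq β := by
  induction j with
  | zero => simp
  | succ k ih => rw [Function.iterate_succ_apply, pdq_expq, ih]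

lemma pdp_iter_expq (β : ℝ) (j : ℕ) (hj : 1 ≤ j) :
    pdp^[j] (expq β) = fun _ => 0 := by
  induction j with
  | zero => omega
  | succ k ih =>
    rw [Function.iterate_succ_apply, pdp_expq, pdp_iter_zero]

lemma pdq_iter_lin (α β : ℝ) (j : ℕ) (hj : 1 ≤ j) :
    pdq^[j] (fun x : ℝ × ℝ => Complex.I * (α * x.1 + β * Real.exp x.2)) = expq β := by
  obtain ⟨k, rfl⟩ := Nat.exists_eq_add_of_le hj
  rw [add_comm, Function.iterate_add_apply, Function.iterate_one, pdq_lin, pdq_iter_expq]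

lemma pdp_iter_lin (α β : ℝ) (j : ℕ) (hj : 2 ≤ j) :
    pdp^[j] (fun x : ℝ × ℝ => Complex.I * (α * x.1 + β * Real.exp x.2)) = fun _ => 0 := by
  obtain ⟨k, rfl⟩ := Nat.exists_eq_add_of_le hj
  rw [add_comm, Function.iterate_add_apply, Function.iterate_succ_apply,
    Function.iterate_one, pdp_lin, pdp_const]
  exact pdp_iter_zero k

lemma moyalP_high (α₁ β₁ α₂ β₂ : ℝ) (r : ℕ) (hr : 2 ≤ r) (x : ℝ × ℝ) :
    moyalP r (fun x => Complex.I * (α₁ * x.1 + β₁ * Real.exp x.2))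
      (fun x => Complex.I * (α₂ * x.1 + β₂ * Real.exp x.2)) x = 0 := by
  unfold moyalP
  apply Finset.sum_eq_zero
  intro j hj
  rw [Finset.mem_range] at hj
  rcases Nat.eq_zero_or_pos j with h0 | h1
  · subst h0
    rw [Nat.sub_zero, Function.iterate_zero, Function.iterate_zero, id_eq, id_eq,
      pdp_iter_lin α₂ β₂ r hr]
    simp
  · rcases Nat.lt_or_ge j r with hjr | hjr
    · -- 1 ≤ j ≤ r-1 : u-factor vanishes
      have h1' : 1 ≤ r - j := by omega
      rw [pdq_iter_lin α₁ β₁ _ h1', pdp_iter_expq β₁ j h1]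
      simp
    · have hj' : j = r := by omega
      subst hj'
      rw [Nat.sub_self, Function.iterate_zero, id_eq, pdp_iter_lin α₁ β₁ j hr]
      simp

lemma moyalStar_lin (α₁ β₁ α₂ β₂ : ℝ) (x : ℝ × ℝ) :
    moyalStar (fun x => Complex.I * (α₁ * x.1 + β₁ * Real.exp x.2))
      (fun x => Complex.I * (α₂ * x.1 + β₂ * Real.exp x.2)) x =
      moyalP 0 (fun x => Complex.I * (α₁ * x.1 + β₁ * Real.exp x.2))
        (fun x => Complex.I * (α₂ * x.1 + β₂ * Real.exp x.2)) x +
      (1 / (2 * Complex.I)) * moyalP 1 (fun x => Complex.I * (α₁ * x.1 + β₁ * Real.exp x.2))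
        (fun x => Complex.I * (α₂ * x.1 + β₂ * Real.exp x.2)) x := by
  unfold moyalStar
  rw [tsum_eq_sum (s := Finset.range 2)]
  · simp [Finset.sum_range_succ]
  · intro r hr
    rw [Finset.mem_range, not_lt] at hr
    rw [moyalP_high _ _ _ _ r hr, mul_zero]

/-- For `Z̃ = α₁p + β₁e^q` and `T̃ = α₂p + β₂e^q` (the Hamiltonian
functions of `Z = α₁X+β₁Y`, `T = α₂X+β₂Y` in `aff(ℝ)`), the Moyal star-commutator
satisfies `iZ̃ ⋆ iT̃ - iT̃ ⋆ iZ̃ = i(α₁β₂ - α₂β₁)e^q`, i.e. it equals `i` times the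
Hamiltonian function of `[Z,T] = (α₁β₂ - α₂β₁)Y`. -/
theorem moyal_star_commutator (α₁ β₁ α₂ β₂ : ℝ) (x : ℝ × ℝ) :
    moyalStar (fun x => Complex.I * (α₁ * x.1 + β₁ * Real.exp x.2))
        (fun x => Complex.I * (α₂ * x.1 + β₂ * Real.exp x.2)) x -
      moyalStar (fun x => Complex.I * (α₂ * x.1 + β₂ * Real.exp x.2))
        (fun x => Complex.I * (α₁ * x.1 + β₁ * Real.exp x.2)) x =
      Complex.I * ((α₁ * β₂ - α₂ * β₁) * Real.exp x.2) := by
  rw [moyalStar_lin, moyalStar_lin]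
  unfold moyalP
  simp only [Finset.sum_range_succ, Finset.sum_range_zero, Function.iterate_zero,
    Function.iterate_one, id_eq, Nat.sub_self, Nat.sub_zero]
  rw [pdp_lin, pdq_lin, pdp_lin, pdq_lin]
  simp only [expq]
  push_cast
  have hI := Complex.I_sq
  field_simp
  ring_nf
  simp only [Nat.choose_one_right, Nat.choose_zero_right, Nat.cast_one]
  ring
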